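/- arXiv:1712.03906 — 9 statements merged into one kernel-verified Lean document; each statement's English description precedes it below -/
import Mathlib

section
/- If X is a topological space of character less than the bounding number 𝔟 (i.e., every point has a neighborhood base of cardinality < 𝔟), then every point x of X is an α₁-point: whenever {σₙ : n ∈ ω} is a countable family of sequences each converging to x, there is a sequence σ converging to x such that the range of each σₙ is almost contained (contained modulo a finite set) in the range of σ. -/
open Filter Topology Set Cardinal

universe u

/-- `f` is eventually dominated by `g`. -/
def EvDom (f g : ℕ → ℕ) : Prop := {n | g n < f n}.Finite

/-- The bounding number 𝔟: the least cardinality of a family in `ℕ → ℕ` that is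
unbounded with respect to eventual domination. -/
noncomputable def boundingNumber : Cardinal.{0} :=
  sInf {c | ∃ F : Set (ℕ → ℕ), #F = c ∧ ¬ ∃ g : ℕ → ℕ, ∀ f ∈ F, EvDom f g}

/-- `x` is an α₁-point: for every countable family of sequences converging to `x`
there is a single sequence converging to `x` whose range almost contains the range
of each member of the family. -/
def IsAlphaOnePoint {X : Type u} [TopologicalSpace X] (x : X) : Prop :=
  ∀ σ : ℕ → ℕ → X, (∀ n, Tendsto (σ n) atTop (𝓝 x)) →
    ∃ τ : ℕ → X, Tendsto τ atTop (𝓝 x) ∧ ∀ n, (Set.range (σ n) \ Set.range τ).Finite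

lemma exists_dom_of_lt_boundingNumber {F : Set (ℕ → ℕ)} (h : #F < boundingNumber) :
    ∃ g : ℕ → ℕ, ∀ f ∈ F, EvDom f g := by
  by_contra hc
  have hmem : #F ∈ {c | ∃ F : Set (ℕ → ℕ), #F = c ∧ ¬ ∃ g : ℕ → ℕ, ∀ f ∈ F, EvDom f g} :=
    ⟨F, rfl, hc⟩
  exact absurd (csInf_le (OrderBot.bddBelow _) hmem) (not_le_of_gt h)

/-- If every point of `X` has a neighborhood base of cardinality `< 𝔟`, then every
point of `X` is an α₁-point. -/
theorem character_lt_b_implies_alpha1 {X : Type u} [TopologicalSpace X]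
    (hchar : ∀ x : X, ∃ B : Set (Set X), #B < Cardinal.lift.{u} boundingNumber ∧
      (∀ s ∈ B, s ∈ 𝓝 x) ∧ ∀ t ∈ 𝓝 x, ∃ s ∈ B, s ⊆ t) :
    ∀ x : X, IsAlphaOnePoint x := by
  intro x σ hσ
  obtain ⟨B, hB, hBnhds, hBbase⟩ := hchar x
  -- choose convergence moduli
  have hf : ∀ s : B, ∀ n : ℕ, ∃ N : ℕ, ∀ k ≥ N, σ n k ∈ (s : Set X) := by
    intro s n
    exact eventually_atTop.mp (hσ n (hBnhds s s.2))
  choose fS hfS using hf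
  -- the family of moduli has cardinality < 𝔟
  have hFlt : #(Set.range fS) < boundingNumber := by
    have h1 : Cardinal.lift.{u} #(Set.range fS) ≤ Cardinal.lift.{0} #B :=
      Cardinal.mk_range_le_lift
    rw [Cardinal.lift_uzero] at h1
    exact Cardinal.lift_lt.mp (lt_of_le_of_lt h1 hB)
  obtain ⟨g, hg⟩ := exists_dom_of_lt_boundingNumber hFlt
  have hgS : ∀ s : B, EvDom (fS s) g := fun s => hg (fS s) ⟨s, rfl⟩
  -- the diagonal sequence
  let e : ℕ ≃ ℕ × ℕ := Nat.pairEquiv.symm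
  let τ : ℕ → X := fun m => σ (e m).1 (g (e m).1 + (e m).2)
  refine ⟨τ, ?_, ?_⟩
  · -- convergence
    rw [Filter.tendsto_def]
    intro U hU
    rw [← Nat.cofinite_eq_atTop, Filter.mem_cofinite]
    obtain ⟨s, hsB, hsU⟩ := hBbase U hU
    have key : {m | τ m ∉ (s : Set X)}.Finite := by
      have hP : {p : ℕ × ℕ | σ p.1 (g p.1 + p.2) ∉ s} ⊆
          ⋃ n ∈ {n | g n < fS ⟨s, hsB⟩ n}, ({n} ×ˢ Set.Iio (fS ⟨s, hsB⟩ n)) := by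
        rintro ⟨n, k⟩ hp
        simp only [Set.mem_setOf_eq] at hp
        have hn : g n < fS ⟨s, hsB⟩ n := by
          by_contra hle
          exact hp (hfS ⟨s, hsB⟩ n (g n + k) (le_trans (not_lt.mp hle) (Nat.le_add_right _ _)))
        have hk : k < fS ⟨s, hsB⟩ n := by
          by_contra hle
          exact hp (hfS ⟨s, hsB⟩ n (g n + k)
            (le_trans (not_lt.mp hle) (Nat.le_add_left _ _)))
        simp only [Set.mem_iUnion, Set.mem_prod, Set.mem_singleton_iff, Set.mem_Iio]
        exact ⟨n, hn, rfl, hk⟩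
      have hPfin : {p : ℕ × ℕ | σ p.1 (g p.1 + p.2) ∉ (s : Set X)}.Finite :=
        Set.Finite.subset
          ((hgS ⟨s, hsB⟩).biUnion fun n _ =>
            (Set.finite_singleton n).prod (Set.finite_Iio _)) hP
      have : {m | τ m ∉ (s : Set X)} = e ⁻¹' {p : ℕ × ℕ | σ p.1 (g p.1 + p.2) ∉ s} := rfl
      rw [this]
      exact hPfin.preimage (e.injective.injOn)
    refine key.subset fun m hm => ?_
    simp only [Set.mem_compl_iff, Set.mem_preimage] at hm
    exact fun hms => hm (hsU hms)
  · -- almost containment of ranges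
    intro n
    refine Set.Finite.subset ((Set.finite_Iio (g n)).image (σ n)) ?_
    rintro y ⟨⟨k, rfl⟩, hy⟩
    refine ⟨k, ?_, rfl⟩
    by_contra hk
    simp only [Set.mem_Iio, not_lt] at hk
    exact hy ⟨e.symm (n, k - g n), by
      simp only [τ, Equiv.apply_symm_apply]
      rw [Nat.add_sub_cancel' hk]⟩
end

section
/- Let X be a regular (T₃) Hausdorff space and Y ⊆ X. Suppose the closure of Y in X has cardinality strictly less than the pseudo-intersection number 𝔭, and that no countably infinite subset of Y is closed and discrete in X. Then there exists a countably compact subspace Y' of X containing Y. -/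
open Filter Topology Set Cardinal

universe u

/-- The pseudo-intersection number 𝔭: the least cardinality of a family of infinite
subsets of ℕ with the strong finite intersection property but no infinite
pseudo-intersection. -/
noncomputable def pseudoIntersectionNumber : Cardinal.{0} :=
  sInf {c | ∃ F : Set (Set ℕ), #F = c ∧ (∀ A ∈ F, A.Infinite) ∧
    (∀ G : Finset (Set ℕ), ↑G ⊆ F → (⋂₀ (G : Set (Set ℕ))).Infinite) ∧
    ¬ ∃ A : Set ℕ, A.Infinite ∧ ∀ B ∈ F, (A \ B).Finite}

/-!
Take `Y'` to be the countable closure of `Y`: the points in the closure of a countable subset of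
`Y`. It contains the accumulation points of its countable subsets, so it suffices to rule out an
infinite countable `Z ⊆ Y'` without accumulation points. Such a `Z` lies in the closure of the
range of some `d : ℕ → Y`, and regularity gives closed neighbourhoods `W x` with `W x ∩ Z ⊆ {x}`.
The fewer than `𝔭` sets `d⁻¹ (W x)ᶜ`, `x ∈ closure Y`, have the strong finite intersection
property, since a point of `Z` outside finitely many `W x` is approached by `d`. An infinite
pseudo-intersection `P` of them makes `d '' P` an infinite subset of `Y` meeting each `W x` in a
finite set, hence closed and discrete.
-/

theorem exists_pseudoIntersection_of_mk_lt {F : Set (Set ℕ)} (hF : #F < pseudoIntersectionNumber)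
    (hsfip : ∀ G : Finset (Set ℕ), ↑G ⊆ F → (⋂₀ (G : Set (Set ℕ))).Infinite) :
    ∃ A : Set ℕ, A.Infinite ∧ ∀ B ∈ F, (A \ B).Finite := by
  by_contra h
  refine notMem_of_lt_csInf' hF ⟨F, rfl, fun B hB => ?_, hsfip, h⟩
  simpa using hsfip {B} (by simpa using hB)

theorem exists_pseudoIntersection_of_lift_mk_lt {α : Type u} {K : Set α}
    (hK : #K < lift.{u} pseudoIntersectionNumber) (A : α → Set ℕ)
    (hsfip : ∀ T : Finset α, ↑T ⊆ K → (⋂ x ∈ T, A x).Infinite) :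
    ∃ P : Set ℕ, P.Infinite ∧ ∀ x ∈ K, (P \ A x).Finite := by
  classical
  have hcard : #(A '' K) < pseudoIntersectionNumber := by
    rw [← lift_lt.{0, u}]
    calc lift.{u} #(A '' K) ≤ lift.{0} #K := mk_image_le_lift
      _ = #K := lift_uzero _
      _ < _ := hK
  obtain ⟨P, hP, hPA⟩ := exists_pseudoIntersection_of_mk_lt hcard fun G hG => by
    obtain ⟨T, hTK, rfl⟩ := Finset.subset_set_image_iff.1 hG
    simpa using hsfip T hTK
  exact ⟨P, hP, fun x hx => hPA _ (mem_image_of_mem A hx)⟩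

section Topology

variable {X : Type*} [TopologicalSpace X]

def countableClosure (Y : Set X) : Set X :=
  {x | ∃ C ⊆ Y, C.Countable ∧ x ∈ closure C}

theorem subset_countableClosure (Y : Set X) : Y ⊆ countableClosure Y :=
  fun y hy => ⟨{y}, singleton_subset_iff.2 hy, countable_singleton y, subset_closure rfl⟩

theorem Set.Countable.exists_countable_subset_closure {Y Z : Set X} (hZ : Z.Countable)
    (hZY : Z ⊆ countableClosure Y) : ∃ D ⊆ Y, D.Countable ∧ Z ⊆ closure D := by
  choose! C hCY hC hZC using fun z (hz : z ∈ Z) =>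
    (hZY hz : ∃ C ⊆ Y, C.Countable ∧ z ∈ closure C)
  exact ⟨⋃ z ∈ Z, C z, iUnion₂_subset hCY, hZ.biUnion hC,
    fun z hz => closure_mono (subset_biUnion_of_mem hz) (hZC z hz)⟩

theorem Set.Countable.closure_subset_countableClosure {Y Z : Set X} (hZ : Z.Countable)
    (hZY : Z ⊆ countableClosure Y) : closure Z ⊆ countableClosure Y := by
  obtain ⟨D, hDY, hD, hZD⟩ := hZ.exists_countable_subset_closure hZY
  exact fun x hx => ⟨D, hDY, hD, closure_minimal hZD isClosed_closure hx⟩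

theorem isClosed_of_forall_not_accPt {Z : Set X} (hZ : ∀ x, ¬AccPt x (𝓟 Z)) : IsClosed Z :=
  (isClosed_iff_derivedSet_subset Z).2 fun x hx => (hZ x hx).elim

theorem exists_isClosed_mem_nhds_inter_subset_singleton [RegularSpace X] {Z : Set X}
    (hZ : ∀ x, ¬AccPt x (𝓟 Z)) (x : X) : ∃ W ∈ 𝓝 x, IsClosed W ∧ W ∩ Z ⊆ {x} := by
  have hclosed : IsClosed (Z \ {x}) :=
    isClosed_of_forall_not_accPt fun y hy => hZ y (hy.mono (principal_mono.2 sdiff_subset))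
  obtain ⟨W, hW, hWc, hWZ⟩ :=
    exists_mem_nhds_isClosed_subset (hclosed.isOpen_compl.mem_nhds fun h => h.2 rfl)
  exact ⟨W, hW, hWc, fun y ⟨hyW, hyZ⟩ => by_contra fun hne => hWZ hyW ⟨hyZ, hne⟩⟩

theorem not_accPt_of_finite_inter_mem_nhds [T1Space X] {S W : Set X} {x : X} (hW : W ∈ 𝓝 x)
    (hfin : (W ∩ S).Finite) : ¬AccPt x (𝓟 S) :=
  fun h => Set.Infinite.of_accPt (h.nhds_inter hW) hfin

theorem isClosed_and_discreteTopology_of_forall_not_accPt {Z : Set X}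
    (hZ : ∀ x, ¬AccPt x (𝓟 Z)) : IsClosed Z ∧ DiscreteTopology Z := by
  rw [← isDiscrete_iff_discreteTopology, isClosed_and_discrete_iff]
  exact fun x => disjoint_iff.2 (not_neBot.1 (hZ x))

theorem infinite_biInter_preimage_compl [T1Space X] {Z : Set X} (hZ : Z.Infinite) {d : ℕ → X}
    (hZd : Z ⊆ closure (range d)) {W : X → Set X} (hW : ∀ x, IsClosed (W x))
    (hWZ : ∀ x, W x ∩ Z ⊆ {x}) (T : Finset X) : (⋂ x ∈ T, d ⁻¹' (W x)ᶜ).Infinite := by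
  refine infinite_of_forall_exists_gt fun N => ?_
  obtain ⟨z, hzZ, hzTS⟩ := (hZ.sdiff (T.finite_toSet.union ((finite_Iic N).image d))).nonempty
  set U := ((⋃ x ∈ T, W x) ∪ d '' Iic N)ᶜ
  have hU : IsOpen U :=
    ((T.finite_toSet.isClosed_biUnion fun x _ => hW x).union ((finite_Iic N).image d).isClosed)
      |>.isOpen_compl
  have hzU : z ∈ U := by
    simp only [U, mem_compl_iff, mem_union, mem_iUnion, not_or, not_exists]
    refine ⟨fun x hx hzW => hzTS (Or.inl ?_), fun hzS => hzTS (Or.inr hzS)⟩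
    rw [mem_singleton_iff.1 (hWZ x ⟨hzW, hzZ⟩)]
    exact hx
  obtain ⟨_, hiU, i, rfl⟩ := mem_closure_iff.1 (hZd hzZ) U hU hzU
  simp only [U, mem_compl_iff, mem_union, mem_iUnion, not_or, not_exists] at hiU
  exact ⟨i, mem_iInter₂.2 hiU.1, not_le.1 fun hiN => hiU.2 (mem_image_of_mem d hiN)⟩

end Topology

theorem exists_infinite_countable_subset_forall_not_accPt {X : Type u} [TopologicalSpace X]
    [T3Space X] {Y Z : Set X} (hcard : #(closure Y) < lift.{u} pseudoIntersectionNumber)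
    (hZY : Z ⊆ countableClosure Y) (hZc : Z.Countable) (hZi : Z.Infinite)
    (hZ : ∀ x, ¬AccPt x (𝓟 Z)) :
    ∃ Z' ⊆ Y, Z'.Countable ∧ Z'.Infinite ∧ ∀ x, ¬AccPt x (𝓟 Z') := by
  obtain ⟨D, hDY, hDc, hZD⟩ := hZc.exists_countable_subset_closure hZY
  obtain ⟨d, rfl⟩ := hDc.exists_eq_range (closure_nonempty_iff.1 (hZi.nonempty.mono hZD))
  choose W hW hWc hWZ using exists_isClosed_mem_nhds_inter_subset_singleton hZ
  obtain ⟨P, hP, hPW⟩ := exists_pseudoIntersection_of_lift_mk_lt hcard (fun x => d ⁻¹' (W x)ᶜ)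
    fun T _ => infinite_biInter_preimage_compl hZi hZD hWc hWZ T
  simp only [preimage_compl, sdiff_compl] at hPW
  have hPY : d '' P ⊆ Y := (image_subset_range d P).trans hDY
  -- Every `y ∈ d '' P` lies in `W y`, so it has only finitely many preimages in `P`.
  have hinf : (d '' P).Infinite := fun hfin =>
    hP <| (hfin.biUnion fun y hy => hPW y (subset_closure (hPY hy))).subset fun i hi =>
      mem_biUnion (mem_image_of_mem d hi) ⟨hi, show d i ∈ W (d i) from mem_of_mem_nhds (hW _)⟩
  refine ⟨d '' P, hPY, P.to_countable.image d, hinf, fun x hx => ?_⟩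
  have hxY : x ∈ closure Y := closure_mono hPY (derivedSet_subset_closure _ hx)
  refine not_accPt_of_finite_inter_mem_nhds (hW x) ?_ hx
  rw [inter_comm, ← image_inter_preimage]
  exact (hPW x hxY).image d

/-- Let `X` be a regular (T₃) Hausdorff space and `Y ⊆ X`. If the closure of `Y` has
cardinality `< 𝔭` and no countably infinite subset of `Y` is closed and discrete in `X`,
then there is a countably compact subspace `Y'` of `X` containing `Y`. -/
theorem exists_countablyCompact_superset {X : Type u} [TopologicalSpace X] [T3Space X]
    (Y : Set X)
    (hcard : #(closure Y) < Cardinal.lift.{u} pseudoIntersectionNumber)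
    (hnd : ∀ Z ⊆ Y, Z.Countable → Z.Infinite → ¬ (IsClosed Z ∧ DiscreteTopology Z)) :
    ∃ Y' : Set X, Y ⊆ Y' ∧
      ∀ Z ⊆ Y', Z.Countable → Z.Infinite → ∃ x ∈ Y', AccPt x (𝓟 Z) := by
  refine ⟨countableClosure Y, subset_countableClosure Y, fun Z hZY hZc hZi => ?_⟩
  by_cases hacc : ∃ x, AccPt x (𝓟 Z)
  · obtain ⟨x, hx⟩ := hacc
    exact ⟨x, hZc.closure_subset_countableClosure hZY (derivedSet_subset_closure Z hx), hx⟩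
  obtain ⟨Z', hZ'Y, hZ'c, hZ'i, hZ'⟩ :=
    exists_infinite_countable_subset_forall_not_accPt hcard hZY hZc hZi (not_exists.1 hacc)
  exact (hnd Z' hZ'Y hZ'c hZ'i (isClosed_and_discreteTopology_of_forall_not_accPt hZ')).elim
end

section
/- Every monotonically normal topological space is collectionwise Hausdorff: every closed discrete subspace D admits an expansion to a pairwise disjoint family of open sets {U_d : d ∈ D} with U_d ∩ D = {d}. -/
open Set Topology

/-- `X` is monotonically normal: there is an operator `G` assigning to each ordered pair
of disjoint closed sets an open set containing the first, monotone in the appropriate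
sense, with `G F₀ F₁ ∩ G F₁ F₀ = ∅`. -/
def MonotonicallyNormal (X : Type*) [TopologicalSpace X] : Prop :=
  ∃ G : Set X → Set X → Set X,
    (∀ F₀ F₁, IsClosed F₀ → IsClosed F₁ → Disjoint F₀ F₁ →
      IsOpen (G F₀ F₁) ∧ F₀ ⊆ G F₀ F₁ ∧ G F₀ F₁ ∩ G F₁ F₀ = ∅) ∧
    (∀ F₀ F₁ F₀' F₁', IsClosed F₀ → IsClosed F₁ → Disjoint F₀ F₁ →
      IsClosed F₀' → IsClosed F₁' → Disjoint F₀' F₁' →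
      F₀ ⊆ F₀' → F₁' ⊆ F₁ → G F₀ F₁ ⊆ G F₀' F₁')

/-- Any subset of a closed discrete subspace is closed. -/
lemma subset_closed_discrete_isClosed {X : Type*} [TopologicalSpace X] {D : Set X}
    (hD : IsClosed D) (hdisc : DiscreteTopology D) {S : Set X} (hS : S ⊆ D) :
    IsClosed S := by
  have : S = Subtype.val '' ((Subtype.val : D → X) ⁻¹' S) := by
    ext x
    simp only [Set.mem_image, Set.mem_preimage, Subtype.exists, exists_and_right,
      exists_eq_right]
    exact ⟨fun hx => ⟨hS hx, hx⟩, fun ⟨_, hx⟩ => hx⟩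
  rw [this]
  exact (hD.isClosedEmbedding_subtypeVal.isClosedMap _ (isClosed_discrete _))

/-- Every monotonically normal space is collectionwise Hausdorff: every closed discrete
subspace `D` admits an expansion to a pairwise disjoint family of open sets. -/
theorem monotonicallyNormal_collectionwiseHausdorff {X : Type*} [TopologicalSpace X]
    (h : MonotonicallyNormal X) :
    ∀ D : Set X, IsClosed D → DiscreteTopology D →
      ∃ U : X → Set X, (∀ d ∈ D, IsOpen (U d) ∧ U d ∩ D = {d}) ∧
        ∀ d ∈ D, ∀ e ∈ D, d ≠ e → Disjoint (U d) (U e) := by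
  obtain ⟨G, hG1, hG2⟩ := h
  intro D hD hdisc
  have hcl : ∀ S ⊆ D, IsClosed S := fun S hS => subset_closed_discrete_isClosed hD hdisc hS
  refine ⟨fun d => G {d} (D \ {d}), ?_, ?_⟩
  · intro d hd
    have h1 : IsClosed ({d} : Set X) := hcl _ (Set.singleton_subset_iff.2 hd)
    have h2 : IsClosed (D \ {d}) := hcl _ Set.diff_subset
    have h3 : Disjoint ({d} : Set X) (D \ {d}) := by
      simp [Set.disjoint_left]
    obtain ⟨ho, hsub, hdisj⟩ := hG1 _ _ h1 h2 h3
    obtain ⟨_, hsub', _⟩ := hG1 _ _ h2 h1 h3.symm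
    refine ⟨ho, ?_⟩
    apply Set.Subset.antisymm
    · rintro x ⟨hx1, hx2⟩
      by_contra hne
      have hxD : x ∈ D \ {d} := ⟨hx2, hne⟩
      have : x ∈ G {d} (D \ {d}) ∩ G (D \ {d}) {d} := ⟨hx1, hsub' hxD⟩
      rw [hdisj] at this
      exact this
    · rintro x rfl
      exact ⟨hsub rfl, hd⟩
  · intro d hd e he hne
    have hcd : IsClosed ({d} : Set X) := hcl _ (Set.singleton_subset_iff.2 hd)
    have hce : IsClosed ({e} : Set X) := hcl _ (Set.singleton_subset_iff.2 he)
    have hde : Disjoint ({d} : Set X) ({e} : Set X) := by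
      simp [Set.disjoint_singleton, hne]
    have hd2 : Disjoint ({d} : Set X) (D \ {d}) := by simp [Set.disjoint_left]
    have he2 : Disjoint ({e} : Set X) (D \ {e}) := by simp [Set.disjoint_left]
    have hsub1 : G {d} (D \ {d}) ⊆ G {d} {e} := by
      apply hG2 _ _ _ _ hcd (hcl _ Set.diff_subset) hd2 hcd hce hde subset_rfl
      exact Set.singleton_subset_iff.2 ⟨he, hne.symm⟩
    have hsub2 : G {e} (D \ {e}) ⊆ G {e} {d} := by
      apply hG2 _ _ _ _ hce (hcl _ Set.diff_subset) he2 hce hcd hde.symm subset_rfl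
      exact Set.singleton_subset_iff.2 ⟨hd, hne⟩
    obtain ⟨_, _, hdisj⟩ := hG1 _ _ hcd hce hde
    rw [Set.disjoint_iff_inter_eq_empty]
    apply Set.eq_empty_of_subset_empty
    calc G {d} (D \ {d}) ∩ G {e} (D \ {e}) ⊆ G {d} {e} ∩ G {e} {d} :=
          Set.inter_subset_inter hsub1 hsub2
      _ = ∅ := hdisj
end

section
/- Let X be a normal Hausdorff space that is the union of countably many subspaces C_m each of whose closures is countably compact. Then X is countably paracompact. -/
open Set Topology Filter

/-- A subset `K` is countably compact if every countably infinite subset of `K` has an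
accumulation point in `K`. -/
def CountablyCompactSet {X : Type*} [TopologicalSpace X] (K : Set X) : Prop :=
  ∀ Z ⊆ K, Z.Countable → Z.Infinite → ∃ x ∈ K, AccPt x (𝓟 Z)

/-- A space is countably paracompact if every countable open cover has a locally finite
open refinement. -/
def CountablyParacompact (X : Type*) [TopologicalSpace X] : Prop :=
  ∀ U : ℕ → Set X, (∀ n, IsOpen (U n)) → (⋃ n, U n) = Set.univ →
    ∃ V : Set (Set X), (∀ v ∈ V, IsOpen v ∧ ∃ n, v ⊆ U n) ∧ ⋃₀ V = Set.univ ∧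
      LocallyFinite (fun v : V => (v : Set X))

/-!
Each closure `closure (C m)` is countably compact, so it lies in one member `U 0 ∪ ⋯ ∪ U (N m)`
of the increasing open cover built from a countable open cover `U`, and by normality so does the
closure of an open neighbourhood `O m` of it. The closed sets `closure (O m)` thus form a family
whose interiors cover the space and which sits level by level inside the increasing cover, and
such a family yields a locally finite open refinement of `U`.
-/

section

variable {X : Type*} [TopologicalSpace X]

theorem CountablyCompactSet.isCountablyCompact [T1Space X] {K : Set X}
    (hK : CountablyCompactSet K) : IsCountablyCompact K := by
  refine isCountablyCompact_iff_infinite_subset_has_accPt.mpr fun B hBK hB => ?_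
  set e := hB.natEmbedding
  have hsub : range ((↑) ∘ e) ⊆ B := range_subset_iff.mpr fun n => (e n).2
  obtain ⟨x, hxK, hx⟩ := hK _ (hsub.trans hBK) (countable_range _)
    (infinite_range_of_injective (Subtype.val_injective.comp e.injective))
  exact ⟨x, hxK, hx.mono (principal_mono.mpr hsub)⟩

/-- Removing from `U i` the closed sets `F j`, `j < i`, gives an open refinement which covers
because `F j ⊆ U 0 ∪ ⋯ ∪ U j`, and which is locally finite because `V k` misses `F i` for
`k > i`. -/
theorem countablyParacompact_of_exists_closed_subset_accumulate
    (h : ∀ U : ℕ → Set X, (∀ n, IsOpen (U n)) → ⋃ n, U n = univ →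
      ∃ F : ℕ → Set X, (∀ i, IsClosed (F i)) ∧ (∀ i, F i ⊆ accumulate U i) ∧
        ∀ x, ∃ i, F i ∈ 𝓝 x) :
    CountablyParacompact X := by
  intro U hUo hUc
  obtain ⟨F, hFc, hFU, hFnhds⟩ := h U hUo hUc
  set V : ℕ → Set X := fun i => U i \ ⋃ j < i, F j
  have hVo (i : ℕ) : IsOpen (V i) :=
    (hUo i).sdiff ((finite_lt_nat i).isClosed_biUnion fun j _ => hFc j)
  have hVcover (x : X) : ∃ i, x ∈ V i := by
    classical
    have hx : ∃ n, x ∈ U n := mem_iUnion.mp (hUc ▸ mem_univ x)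
    refine ⟨Nat.find hx, Nat.find_spec hx, fun hxF => ?_⟩
    obtain ⟨j, hj, hxj⟩ := mem_iUnion₂.mp hxF
    obtain ⟨k, hk, hxk⟩ := mem_accumulate.mp (hFU j hxj)
    exact Nat.find_min hx (hk.trans_lt hj) hxk
  have hVlf : LocallyFinite V := by
    intro x
    obtain ⟨i, hi⟩ := hFnhds x
    refine ⟨F i, hi, (finite_le_nat i).subset fun k ⟨y, hyV, hyF⟩ => ?_⟩
    by_contra! hik
    exact hyV.2 (mem_iUnion₂.mpr ⟨i, not_le.mp hik, hyF⟩)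
  refine ⟨range V, ?_, ?_, hVlf.on_range⟩
  · rintro _ ⟨i, rfl⟩
    exact ⟨hVo i, i, sdiff_subset⟩
  · rw [sUnion_range]
    exact eq_univ_of_forall fun x => mem_iUnion.mpr (hVcover x)

end

/-- A normal Hausdorff space which is a countable union of subspaces with countably
compact closures is countably paracompact. -/
theorem sigma_countablyCompact_closure_implies_countablyParacompact
    {X : Type*} [TopologicalSpace X] [T2Space X] [NormalSpace X]
    (C : ℕ → Set X) (hcover : (⋃ m, C m) = Set.univ)
    (hcc : ∀ m, CountablyCompactSet (closure (C m))) :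
    CountablyParacompact X := by
  refine countablyParacompact_of_exists_closed_subset_accumulate fun U hUo hUc => ?_
  have hacc_open (n : ℕ) : IsOpen (accumulate U n) := isOpen_biUnion fun j _ => hUo j
  have hlevel (m : ℕ) : ∃ N, closure (C m) ⊆ accumulate U N :=
    (hcc m).isCountablyCompact.elim_directed_cover _ hacc_open
      (by rw [iUnion_accumulate, hUc]; exact subset_univ _) monotone_accumulate.directed_le
  choose N hN using hlevel
  choose O hOo hCO hOU using fun m =>
    normal_exists_closure_subset isClosed_closure (hacc_open (N m)) (hN m)
  -- `m ≤ i` keeps the union finite, `N m ≤ i` keeps it inside `accumulate U i`.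
  refine ⟨fun i => ⋃ m ∈ {m | m ≤ i ∧ N m ≤ i}, closure (O m), fun i => ?_, fun i => ?_,
    fun x => ?_⟩
  · exact ((finite_le_nat i).subset fun m hm => hm.1).isClosed_biUnion fun _ _ => isClosed_closure
  · exact iUnion₂_subset fun m hm => (hOU m).trans (monotone_accumulate hm.2)
  · obtain ⟨m, hm⟩ := mem_iUnion.mp (hcover ▸ mem_univ x)
    refine ⟨max m (N m), mem_of_superset ((hOo m).mem_nhds (hCO m (subset_closure hm))) ?_⟩
    exact subset_closure.trans
      (subset_biUnion_of_mem (u := fun m => closure (O m)) ⟨le_max_left _ _, le_max_right _ _⟩)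
end

section
/- Let δ be an ordinal of uncountable cofinality and let E be a stationary subset of δ that is locally compact in its subspace (order) topology. Then some tail (final segment) of E is a closed, unbounded subset of δ. -/
/-!
A locally compact subspace `E` of a Hausdorff space is locally closed, so the set
`B = closure E \ E` of limit points of `E` missing from `E` is closed. If `B` were unbounded
in `δ`, then `B ∩ δ` would be a club disjoint from `E`, contradicting stationarity. Hence `B`
is bounded below `δ` by some `β`, and above `β` the set `E` contains all its limit points below
`δ`; being stationary, `E` is also unbounded, so `E ∩ [β, δ)` is a club.
-/

open Set

/-- `C` is a closed unbounded (club) subset of the ordinal `δ`. -/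
def IsClubIn (C : Set Ordinal) (δ : Ordinal) : Prop :=
  C ⊆ Set.Iio δ ∧
  (∀ a < δ, ∃ b ∈ C, a ≤ b ∧ b < δ) ∧
  (∀ a < δ, a ≠ 0 → (∀ b < a, ∃ c ∈ C, b < c ∧ c < a) → a ∈ C)

open Filter Topology

theorem isLocallyClosed_of_locallyCompactSpace {X : Type*} [TopologicalSpace X] [T2Space X]
    {s : Set X} [LocallyCompactSpace s] : IsLocallyClosed s := by
  refine ((isLocallyClosed_tfae s).out 0 3).2 fun x hx => ?_
  obtain ⟨K, hK, -, hKc⟩ := local_compact_nhds (x := (⟨x, hx⟩ : s)) univ_mem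
  obtain ⟨U, hU, hUK⟩ := (mem_nhds_subtype s ⟨x, hx⟩ K).1 hK
  obtain ⟨V, hVU, hV, hxV⟩ := mem_nhds_iff.1 hU
  have hKclosed : IsClosed (Subtype.val '' K) := (hKc.image continuous_subtype_val).isClosed
  have hVs : V ∩ s ⊆ Subtype.val '' K := fun y ⟨hyV, hys⟩ => ⟨⟨y, hys⟩, hUK (hVU hyV), rfl⟩
  refine ⟨V, hxV, hV, ?_⟩
  calc V ∩ closure s ⊆ closure (V ∩ s) := hV.inter_closure
    _ ⊆ Subtype.val '' K := closure_minimal hVs hKclosed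
    _ ⊆ s := Subtype.coe_image_subset s K

theorem IsLocallyClosed.isClosed_closure_diff {X : Type*} [TopologicalSpace X] {s : Set X}
    (hs : IsLocallyClosed s) : IsClosed (closure s \ s) :=
  isOpen_compl_iff.1 hs.isOpen_coborder

namespace Ordinal

theorem accPt_principal_iff {a : Ordinal} {C : Set Ordinal} :
    AccPt a (𝓟 C) ↔ a ≠ 0 ∧ ∀ b < a, ∃ c ∈ C, b < c ∧ c < a := by
  simp [SuccOrder.accPt_principal, isMin_iff_eq_bot, Set.Nonempty]

theorem isClubIn_iff_accPt {C : Set Ordinal} {δ : Ordinal} :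
    IsClubIn C δ ↔ C ⊆ Iio δ ∧ (∀ a < δ, ∃ b ∈ C, a ≤ b ∧ b < δ) ∧
      ∀ a < δ, AccPt a (𝓟 C) → a ∈ C := by
  simp only [IsClubIn, accPt_principal_iff, and_imp]

theorem isClubIn_inter_Iio_of_isClosed {C : Set Ordinal} {δ : Ordinal} (hC : IsClosed C)
    (hunb : ∀ a < δ, ∃ b ∈ C, a ≤ b ∧ b < δ) : IsClubIn (C ∩ Iio δ) δ := by
  refine isClubIn_iff_accPt.2 ⟨inter_subset_right, fun a ha => ?_, fun a ha hacc => ⟨?_, ha⟩⟩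
  · obtain ⟨b, hbC, hab, hbδ⟩ := hunb a ha
    exact ⟨b, ⟨hbC, hbδ⟩, hab, hbδ⟩
  · exact hC.closure_subset_iff.2 inter_subset_left (mem_closure_iff_clusterPt.2 hacc.clusterPt)

theorem exists_mem_le_of_forall_isClubIn {E : Set Ordinal} {δ : Ordinal}
    (hstat : ∀ C : Set Ordinal, IsClubIn C δ → (E ∩ C).Nonempty) :
    ∀ a < δ, ∃ b ∈ E, a ≤ b ∧ b < δ := by
  intro a ha
  have hclub : IsClubIn (Ici a ∩ Iio δ) δ := isClubIn_inter_Iio_of_isClosed isClosed_Ici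
    fun x hx => ⟨max a x, le_max_left a x, le_max_right a x, max_lt ha hx⟩
  obtain ⟨b, hbE, hab, hbδ⟩ := hstat _ hclub
  exact ⟨b, hbE, hab, hbδ⟩

theorem isClubIn_inter_Ici {E : Set Ordinal} {δ β : Ordinal} (hE : E ⊆ Iio δ)
    (hunb : ∀ a < δ, ∃ b ∈ E, a ≤ b ∧ b < δ) (hβδ : β < δ) (hβ : closure E ∩ Ico β δ ⊆ E) :
    IsClubIn (E ∩ Ici β) δ := by
  refine isClubIn_iff_accPt.2 ⟨inter_subset_left.trans hE, fun a ha => ?_, fun a ha hacc => ?_⟩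
  · obtain ⟨b, hbE, hab, hbδ⟩ := hunb (max a β) (max_lt ha hβδ)
    exact ⟨b, ⟨hbE, (le_max_right a β).trans hab⟩, (le_max_left a β).trans hab, hbδ⟩
  · have hcl : a ∈ closure (E ∩ Ici β) := mem_closure_iff_clusterPt.2 hacc.clusterPt
    have hβa : β ≤ a := isClosed_Ici.closure_subset_iff.2 inter_subset_right hcl
    exact ⟨hβ ⟨closure_mono inter_subset_left hcl, hβa, ha⟩, hβa⟩

end Ordinal

theorem stationary_locallyCompact_tail_club_general (δ : Ordinal)
    (E : Set Ordinal) (hE : E ⊆ Set.Iio δ)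
    (hstat : ∀ C : Set Ordinal, IsClubIn C δ → (E ∩ C).Nonempty)
    (hlc : LocallyCompactSpace ↥E) :
    ∃ β < δ, IsClubIn (E ∩ Set.Ici β) δ := by
  have hB : IsClosed (closure E \ E) := isLocallyClosed_of_locallyCompactSpace.isClosed_closure_diff
  obtain ⟨β, hβδ, hβ⟩ : ∃ β < δ, ∀ b ∈ closure E \ E, β ≤ b → δ ≤ b := by
    by_contra! hunb
    obtain ⟨x, hxE, hxB, -⟩ := hstat _ (Ordinal.isClubIn_inter_Iio_of_isClosed hB hunb)
    exact hxB.2 hxE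
  refine ⟨β, hβδ, Ordinal.isClubIn_inter_Ici hE (Ordinal.exists_mem_le_of_forall_isClubIn hstat)
    hβδ ?_⟩
  rintro b ⟨hbE, hβb, hbδ⟩
  by_contra hb
  exact (hβ b ⟨hbE, hb⟩ hβb).not_gt hbδ

/-- If `δ` has uncountable cofinality and `E` is a stationary subset of `δ` that is
locally compact in the subspace topology, then some tail of `E` is a club in `δ`. -/
theorem stationary_locallyCompact_tail_club (δ : Ordinal)
    (hδ : Cardinal.aleph0 < δ.cof) (E : Set Ordinal) (hE : E ⊆ Set.Iio δ)
    (hstat : ∀ C : Set Ordinal, IsClubIn C δ → (E ∩ C).Nonempty)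
    (hlc : LocallyCompactSpace ↥E) :
    ∃ β < δ, IsClubIn (E ∩ Set.Ici β) δ :=
  stationary_locallyCompact_tail_club_general δ E hE hstat hlc
end

section
/- Let E = ω ∪ {ω₁·ξ : ξ < ω₁} considered as a subspace of the ordinal ω₁·ω₁ with its order topology. Then E is locally compact, the set T = {ω₁·ξ : ξ < ω₁} is a tail of E that is homeomorphic to ω₁ and closed unbounded in ω₁·ω₁, but no tail of E is a tail (final segment) of ω₁·ω₁. -/
/-!
The set `T` is the image of `ω₁` under the normal function `ξ ↦ ω₁ * (1 + ξ)`, and a strictly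
monotone continuous map of linear orders is an embedding, so `T ≃ₜ ω₁`. The multiples of `ω₁` form
the range of a normal function, hence a closed set, which makes `T` closed below `ω₁ * ω₁`; it is
unbounded there since `a < ω₁ * succ (a / ω₁)`. The closure of `E` adds at most the two points `ω`
and `ω₁ * ω₁`, so `E` is locally closed in the locally compact space of ordinals, hence locally
compact. Finally, every element of `T` is a limit ordinal, whereas every final segment of the limit
ordinal `ω₁ * ω₁` contains a successor ordinal above `ω`, which therefore lies outside `E`.
-/

open Set Topology

universe u

open Filter Order Ordinal

theorem StrictMono.isEmbedding_of_continuous {α β : Type*} [LinearOrder α] [LinearOrder β]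
    [TopologicalSpace α] [OrderTopology α] [TopologicalSpace β] [OrderTopology β] {f : α → β}
    (hf : StrictMono f) (hc : Continuous f) : IsEmbedding f :=
  ⟨⟨le_antisymm (continuous_iff_le_induced.1 hc)
    ((induced_topology_le_preorder hf.lt_iff_lt).trans_eq
      OrderTopology.topology_eq_generate_intervals.symm)⟩, hf.injective⟩

theorem SuccOrder.weaklyLocallyCompactSpace {α : Type*} [LinearOrder α] [TopologicalSpace α]
    [OrderTopology α] [SuccOrder α] [NoMaxOrder α] [OrderBot α] [CompactIccSpace α] :
    WeaklyLocallyCompactSpace α :=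
  ⟨fun x => ⟨Iic x, Icc_bot (a := x) ▸ isCompact_Icc,
    Iio_succ x ▸ isOpen_Iio.mem_nhds (lt_succ x)⟩⟩

theorem isLocallyClosed_of_finite_closure_diff {X : Type*} [TopologicalSpace X] [T1Space X]
    {s : Set X} (h : (closure s \ s).Finite) : IsLocallyClosed s :=
  isLocallyClosed_iff_isOpen_coborder.2 h.isClosed.isOpen_compl

theorem Ordinal.isClosed_range_of_isNormal {f : Ordinal.{u} → Ordinal.{u}} (hf : IsNormal f) :
    IsClosed (range f) := by
  refine isClosed_iff_iSup.2 fun {ι} _ g hg => ?_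
  choose x hx using hg
  refine ⟨⨆ i, x i, ?_⟩
  rw [hf.map_iSup bddAbove_of_small]
  simp only [hx]

theorem Ordinal.isClosed_range_mul_right (a : Ordinal) : IsClosed (range (a * ·)) := by
  rcases eq_zero_or_pos a with rfl | ha
  · simp
  · exact isClosed_range_of_isNormal (isNormal_mul_right ha)

def posMultiplesBelowSq (κ : Ordinal) : Set Ordinal :=
  {x | ∃ ξ : Ordinal, 0 < ξ ∧ ξ < κ ∧ x = κ * ξ}

def omegaUnionPosMultiples (κ : Ordinal) : Set Ordinal :=
  {x | x < ω} ∪ posMultiplesBelowSq κ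

section

variable {κ : Ordinal.{u}}

theorem Ordinal.lt_mul_self_of_isSuccLimit (hκ : IsSuccLimit κ) : κ < κ * κ := by
  simpa using mul_lt_mul_of_pos_left (one_lt_of_isSuccLimit hκ) hκ.bot_lt

theorem Ordinal.one_add_lt_of_isSuccLimit {ξ : Ordinal} (hκ : IsSuccLimit κ) (hξ : ξ < κ) :
    1 + ξ < κ := by
  rcases lt_or_ge ξ ω with h | h
  · exact (isPrincipal_add_omega0 one_lt_omega0 h).trans_le (omega0_le_of_isSuccLimit hκ)
  · rwa [one_add_of_omega0_le h]

theorem posMultiplesBelowSq_subset_range : posMultiplesBelowSq κ ⊆ range (κ * ·) := by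
  rintro _ ⟨ξ, -, -, rfl⟩
  exact ⟨ξ, rfl⟩

theorem posMultiplesBelowSq_eq_range_inter_Ioo (hκ : 0 < κ) :
    posMultiplesBelowSq κ = range (κ * ·) ∩ Ioo 0 (κ * κ) := by
  ext x
  constructor
  · rintro ⟨ξ, hξ0, hξκ, rfl⟩
    exact ⟨⟨ξ, rfl⟩, mul_pos hκ hξ0, mul_lt_mul_of_pos_left hξκ hκ⟩
  · rintro ⟨⟨ξ, rfl⟩, hx0, hxδ⟩
    exact ⟨ξ, (mul_pos_iff_of_pos_left hκ).1 hx0, (mul_lt_mul_iff_right₀ hκ).1 hxδ, rfl⟩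

theorem le_of_mem_posMultiplesBelowSq {x : Ordinal} (hx : x ∈ posMultiplesBelowSq κ) :
    κ ≤ x := by
  obtain ⟨ξ, hξ, -, rfl⟩ := hx
  exact le_mul_left κ hξ

theorem isSuccLimit_of_mem_posMultiplesBelowSq (hκ : IsSuccLimit κ) {x : Ordinal}
    (hx : x ∈ posMultiplesBelowSq κ) : IsSuccLimit x := by
  obtain ⟨ξ, hξ, -, rfl⟩ := hx
  exact isSuccLimit_mul_left hκ hξ

theorem exists_mem_posMultiplesBelowSq_ge (hκ : IsSuccLimit κ) {a : Ordinal} (ha : a < κ * κ) :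
    ∃ b ∈ posMultiplesBelowSq κ, a ≤ b ∧ b < κ * κ := by
  have hκ0 : κ ≠ 0 := hκ.bot_lt.ne'
  have hsucc : succ (a / κ) < κ := hκ.succ_lt ((lt_mul_iff_div_lt hκ0).1 ha)
  exact ⟨κ * succ (a / κ), ⟨_, zero_le.trans_lt (lt_succ _), hsucc, rfl⟩,
    (lt_mul_succ_div a hκ0).le, mul_lt_mul_of_pos_left hsucc hκ.bot_lt⟩

theorem isClubIn_posMultiplesBelowSq (hκ : IsSuccLimit κ) :
    IsClubIn (posMultiplesBelowSq κ) (κ * κ) := by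
  have hκ0 : 0 < κ := hκ.bot_lt
  refine ⟨fun x hx => (posMultiplesBelowSq_eq_range_inter_Ioo hκ0 ▸ hx).2.2,
    fun a ha => exists_mem_posMultiplesBelowSq_ge hκ ha, fun a ha ha0 hlim => ?_⟩
  have hacc : AccPt a (𝓟 (posMultiplesBelowSq κ)) :=
    SuccOrder.accPt_principal.2 ⟨by simpa [isMin_iff_eq_bot] using ha0, fun b hb =>
      let ⟨c, hc, hbc, hca⟩ := hlim b hb; ⟨c, hc, hbc, hca⟩⟩
  have hmul : a ∈ range (κ * ·) := isClosed_iff_accPt.1 (isClosed_range_mul_right κ) a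
    (hacc.mono (principal_mono.2 posMultiplesBelowSq_subset_range))
  rw [posMultiplesBelowSq_eq_range_inter_Ioo hκ0]
  exact ⟨hmul, pos_iff_ne_zero.2 ha0, ha⟩

theorem posMultiplesBelowSq_eq_image (hκ : IsSuccLimit κ) :
    posMultiplesBelowSq κ = (fun ξ => κ * (1 + ξ)) '' Iio κ := by
  ext x
  constructor
  · rintro ⟨ξ, hξ0, hξκ, rfl⟩
    refine ⟨ξ - 1, (sub_le_self ξ 1).trans_lt hξκ, ?_⟩
    simp only [Ordinal.add_sub_cancel_of_le (one_le_iff_pos.2 hξ0)]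
  · rintro ⟨ξ, hξ, rfl⟩
    exact ⟨1 + ξ, zero_lt_one.trans_le le_self_add, one_add_lt_of_isSuccLimit hκ hξ, rfl⟩

noncomputable def posMultiplesBelowSqHomeomorph (hκ : IsSuccLimit κ) :
    posMultiplesBelowSq κ ≃ₜ Iio κ :=
  have hnormal : IsNormal (fun ξ => κ * (1 + ξ)) :=
    (isNormal_mul_right hκ.bot_lt).comp (isNormal_add_right 1)
  (Homeomorph.setCongr (posMultiplesBelowSq_eq_image hκ)).trans
    ((hnormal.strictMono.isEmbedding_of_continuous hnormal.continuous).homeomorphImage _).symm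

theorem closure_omegaUnionPosMultiples_diff_subset (hκ : 0 < κ) :
    closure (omegaUnionPosMultiples κ) \ omegaUnionPosMultiples κ ⊆ {ω, κ * κ} := by
  have hsub : omegaUnionPosMultiples κ ⊆ Iic ω ∪ (range (κ * ·) ∩ Iic (κ * κ)) := by
    rintro x (hx | hx)
    · exact Or.inl (Iio_subset_Iic_self hx)
    · rw [posMultiplesBelowSq_eq_range_inter_Ioo hκ] at hx
      exact Or.inr ⟨hx.1, hx.2.2.le⟩
  have hclosed : IsClosed (Iic ω ∪ (range (κ * ·) ∩ Iic (κ * κ))) :=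
    isClosed_Iic.union ((isClosed_range_mul_right κ).inter isClosed_Iic)
  rintro x ⟨hx, hxE⟩
  simp only [omegaUnionPosMultiples, posMultiplesBelowSq_eq_range_inter_Ioo hκ, mem_union,
    mem_ofPred_eq, mem_inter_iff, mem_Ioo, not_or, not_and, not_lt] at hxE
  rcases closure_minimal hsub hclosed hx with hxω | ⟨hxR, hxδ⟩
  · exact Or.inl (le_antisymm hxω hxE.1)
  · exact Or.inr (le_antisymm hxδ (hxE.2 hxR (omega0_pos.trans_le hxE.1)))

theorem locallyCompactSpace_omegaUnionPosMultiples (hκ : 0 < κ) :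
    LocallyCompactSpace (omegaUnionPosMultiples κ) := by
  have := SuccOrder.weaklyLocallyCompactSpace (α := Ordinal.{u})
  exact (isLocallyClosed_of_finite_closure_diff ((toFinite _).subset
    (closure_omegaUnionPosMultiples_diff_subset hκ))).locallyCompactSpace

theorem posMultiplesBelowSq_eq_tail (hκ : ω ≤ κ) :
    posMultiplesBelowSq κ = {x | x ∈ omegaUnionPosMultiples κ ∧ κ ≤ x} := by
  ext x
  refine ⟨fun hx => ⟨Or.inr hx, le_of_mem_posMultiplesBelowSq hx⟩, ?_⟩
  rintro ⟨hx | hx, hκx⟩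
  · exact absurd (hx.trans_le hκ) hκx.not_gt
  · exact hx

theorem tail_omegaUnionPosMultiples_ne_Ico (hκ : IsSuccLimit κ) (β : Ordinal) {γ : Ordinal}
    (hγ : γ < κ * κ) : {x | x ∈ omegaUnionPosMultiples κ ∧ β ≤ x} ≠ Ico γ (κ * κ) := by
  intro heq
  have hωδ : ω < κ * κ :=
    (omega0_le_of_isSuccLimit hκ).trans_lt (lt_mul_self_of_isSuccLimit hκ)
  have hx : succ (max γ ω) ∈ Ico γ (κ * κ) :=
    ⟨(le_max_left γ ω).trans (le_succ _),
      (isSuccLimit_mul_left hκ hκ.bot_lt).succ_lt (max_lt hγ hωδ)⟩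
  rw [← heq] at hx
  rcases hx.1 with hxω | hxT
  · exact hxω.not_ge ((le_max_right γ ω).trans (le_succ _))
  · exact not_isSuccLimit_succ _ (isSuccLimit_of_mem_posMultiplesBelowSq hκ hxT)

end

/-- Let `E = ω ∪ {ω₁·ξ : 0 < ξ < ω₁}` inside the ordinal `ω₁·ω₁`. Then `E` is locally
compact, `T = {ω₁·ξ : 0 < ξ < ω₁}` is a tail of `E`, homeomorphic to `ω₁`, and club in
`ω₁·ω₁`, but no tail of `E` is a final segment of `ω₁·ω₁`. -/
theorem example_tail_not_tail :
    let ω1 : Ordinal := (Cardinal.aleph 1).ord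
    let δ : Ordinal := ω1 * ω1
    let T : Set Ordinal := {x | ∃ ξ : Ordinal, 0 < ξ ∧ ξ < ω1 ∧ x = ω1 * ξ}
    let E : Set Ordinal := {x | x < Ordinal.omega0} ∪ T
    LocallyCompactSpace ↥E ∧
    (∃ β < δ, T = {x | x ∈ E ∧ β ≤ x}) ∧
    Nonempty (↥T ≃ₜ ↥(Set.Iio ω1)) ∧
    IsClubIn T δ ∧
    ¬ ∃ β < δ, ∃ γ < δ, {x | x ∈ E ∧ β ≤ x} = Set.Ico γ δ := by
  intro ω1 δ T E
  have hω1 : IsSuccLimit ω1 := Cardinal.isSuccLimit_ord (Cardinal.aleph0_le_aleph 1)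
  refine ⟨locallyCompactSpace_omegaUnionPosMultiples hω1.bot_lt,
    ⟨ω1, lt_mul_self_of_isSuccLimit hω1,
      posMultiplesBelowSq_eq_tail (omega0_le_of_isSuccLimit hω1)⟩,
    ⟨posMultiplesBelowSqHomeomorph hω1⟩, isClubIn_posMultiplesBelowSq hω1, ?_⟩
  rintro ⟨β, -, γ, hγ, heq⟩
  exact tail_omegaUnionPosMultiples_ne_Ico hω1 β hγ heq
end

section
/- Let f : Y → X be a continuous closed surjection of topological spaces such that X is ω₁-compact and every fiber f⁻¹{x} is ω₁-compact. Then Y is ω₁-compact. -/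
open Set Topology

/-- A space is ω₁-compact (has countable extent) if every closed discrete subspace is
countable. -/
def OmegaOneCompact (X : Type*) [TopologicalSpace X] : Prop :=
  ∀ D : Set X, IsClosed D → DiscreteTopology D → D.Countable

/-- If `f : Y → X` is a continuous closed surjection, `X` is ω₁-compact and every fiber
of `f` is ω₁-compact, then `Y` is ω₁-compact. -/
theorem omegaOneCompact_of_closed_map {X Y : Type*} [TopologicalSpace X]
    [TopologicalSpace Y] (f : Y → X) (hc : Continuous f) (hclosed : IsClosedMap f)
    (hs : Function.Surjective f) (hX : OmegaOneCompact X)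
    (hfib : ∀ x : X, OmegaOneCompact ↥(f ⁻¹' {x})) :
    OmegaOneCompact Y := by
  intro D hDc hDd
  -- every subset of D is closed in Y
  have subClosed : ∀ S : Set Y, S ⊆ D → IsClosed S := by
    intro S hS
    have h1 : IsClosed ((Subtype.val : ↥D → Y) '' (Subtype.val ⁻¹' S)) :=
      hDc.isClosedEmbedding_subtypeVal.isClosedMap _ (isClosed_discrete _)
    rwa [Subtype.image_preimage_coe, inter_eq_self_of_subset_right hS] at h1
  -- a section of f over f '' D with values in D
  choose g hgD hgf using fun x : ↥(f '' D) => x.2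
  have hrange : range g ⊆ D := range_subset_iff.2 hgD
  have hcomp : f ∘ g = (Subtype.val : ↥(f '' D) → X) := funext hgf
  have hTim : f '' range g = f '' D := by
    rw [← range_comp, hcomp, Subtype.range_coe]
  have hTclosed : IsClosed (f '' D) := hclosed D hDc
  -- f '' D is discrete
  have hTdisc : DiscreteTopology ↥(f '' D) := by
    rw [discreteTopology_subtype_iff]
    intro x hx
    have hkey : f '' D \ {x} = f '' (range g \ {g ⟨x, hx⟩}) := by
      conv_lhs => rw [← hTim]
      ext y
      constructor
      · rintro ⟨⟨d, ⟨a, rfl⟩, rfl⟩, hne⟩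
        refine ⟨g a, ⟨mem_range_self a, ?_⟩, rfl⟩
        intro h
        apply hne
        rw [mem_singleton_iff] at h
        have h2 : f (g a) = f (g ⟨x, hx⟩) := by rw [h]
        rw [mem_singleton_iff, h2, hgf]
      · rintro ⟨d, ⟨⟨a, rfl⟩, hne⟩, rfl⟩
        refine ⟨⟨g a, mem_range_self a, rfl⟩, ?_⟩
        intro h
        apply hne
        have : (a : X) = x := by rw [← hgf a]; exact h
        rw [show a = (⟨x, hx⟩ : ↥(f '' D)) from Subtype.ext this]
        exact mem_singleton _
    have hclosed' : IsClosed (f '' D \ {x}) := by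
      rw [hkey]
      exact hclosed _ (subClosed _ (fun y hy => hrange hy.1))
    have hxn : x ∉ closure (f '' D \ {x}) := by
      rw [hclosed'.closure_eq]
      simp
    rw [← nhdsWithin_inter',
      show {x}ᶜ ∩ f '' D = f '' D \ {x} by rw [inter_comm, diff_eq]]
    rw [← Filter.not_neBot, ← mem_closure_iff_nhdsWithin_neBot]
    exact hxn
  have hT : (f '' D).Countable := hX _ hTclosed hTdisc
  -- each fiber meets D in a countable set
  have hfibcount : ∀ x : X, (D ∩ f ⁻¹' {x}).Countable := by
    intro x
    set Dx : Set ↥(f ⁻¹' {x}) := Subtype.val ⁻¹' D with hDx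
    have hclosedDx : IsClosed Dx := hDc.preimage continuous_subtype_val
    have hdiscDx : DiscreteTopology ↥Dx := by
      let e : ↥Dx → ↥D := fun y => ⟨y.1.1, y.2⟩
      have hce : Continuous e :=
        Continuous.subtype_mk (continuous_subtype_val.comp continuous_subtype_val) _
      have hemb : Topology.IsEmbedding e := by
        refine Topology.IsEmbedding.of_comp hce continuous_subtype_val ?_
        have h2 : Topology.IsEmbedding ((Subtype.val : ↥(f ⁻¹' {x}) → Y) ∘
            (Subtype.val : ↥Dx → ↥(f ⁻¹' {x}))) :=
          Topology.IsEmbedding.subtypeVal.comp Topology.IsEmbedding.subtypeVal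
        exact h2
      exact hemb.discreteTopology
    have hcnt := hfib x Dx hclosedDx hdiscDx
    have him : D ∩ f ⁻¹' {x} = Subtype.val '' Dx := by
      rw [hDx, Subtype.image_preimage_coe, inter_comm]
    rw [him]
    exact hcnt.image _
  -- conclude
  have hsub : D ⊆ ⋃ x ∈ f '' D, D ∩ f ⁻¹' {x} := fun d hd =>
    mem_biUnion (mem_image_of_mem f hd) ⟨hd, rfl⟩
  exact (hT.biUnion fun x _ => hfibcount x).mono hsub
end

section
/- Suppose there exists a (κ, λ)-gap in (ω^ω, ≤*) with κ, λ regular uncountable cardinals and κ > ℵ₁. Then PID_λ fails: there is a P-ideal ℐ of countable subsets of λ such that (A) there is no subset S of λ of cardinality ℵ₁ all of whose countable subsets lie in ℐ, and (B) λ is not a countable union of sets each of which has finite intersection with every member of ℐ. -/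
open Set Cardinal

/-- `f ≤* g`: `f n ≤ g n` for all but finitely many `n`. -/
def LeStar (f g : ℕ → ℕ) : Prop := {n | g n < f n}.Finite

/-- `(f, g)` (indexed by the ordinals below `κ.ord`, `lam.ord`) is a `(κ, λ)`-pregap. -/
def IsPregap (κ lam : Cardinal.{0}) (f g : Ordinal → ℕ → ℕ) : Prop :=
  (∀ α < κ.ord, Monotone (f α)) ∧
  (∀ β < lam.ord, Monotone (g β)) ∧
  (∀ α₁ α₂ : Ordinal, α₁ ≤ α₂ → α₂ < κ.ord → LeStar (f α₁) (f α₂)) ∧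
  (∀ β₁ β₂ : Ordinal, β₁ ≤ β₂ → β₂ < lam.ord → LeStar (g β₂) (g β₁)) ∧
  (∀ α < κ.ord, ∀ β < lam.ord, LeStar (f α) (g β))

/-- A `(κ, λ)`-pregap is a gap if no `h` interpolates between the two sides. -/
def IsGap (κ lam : Cardinal.{0}) (f g : Ordinal → ℕ → ℕ) : Prop :=
  IsPregap κ lam f g ∧
    ¬ ∃ h : ℕ → ℕ, (∀ α < κ.ord, LeStar (f α) h) ∧ ∀ β < lam.ord, LeStar h (g β)

/-- `I` is a P-ideal of countable subsets of `S`. -/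
def IsPIdealOn (I : Set (Set Ordinal)) (S : Set Ordinal) : Prop :=
  (∀ A ∈ I, A ⊆ S ∧ A.Countable) ∧
  (∀ A ∈ I, ∀ B ⊆ A, B ∈ I) ∧
  (∀ A ∈ I, ∀ B ∈ I, A ∪ B ∈ I) ∧
  (∀ Q ⊆ I, Q.Countable → ∃ A ∈ I, ∀ B ∈ Q, (B \ A).Finite)

/-!
The ideal `ℐ = gapIdeal κ λ f g` is a P-ideal because countably many witnesses `α` have a
common bound below `κ`, and a single witness lets one diagonalize.

Alternative (A) fails because `cf κ > ℵ₁`: list a set `S` of size `ℵ₁` in order type `ω₁`; the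
witnesses of its countable initial segments have a common bound `α < κ`, and since every
countable subset of `S` lies in such a segment, for each `n` only finitely many `β ∈ S` satisfy
`f_α ≤ g_β` from `n` on.  As `f_α ≤* g_β` for every `β`, `S` is countable.

Alternative (B) fails because `cf λ > ℵ₀`: one of the pieces `C` is cofinal in `λ`.
Orthogonality of `C` to `ℐ` yields, for each `α < κ`, one `N` beyond which `f_α ≤ g_β` for all
`β ∈ C`, and then `h = inf_{β ∈ C} g_β` fills the gap.
-/

/-- `LeFrom n (f α) (g β)` is the paper's `{k : f_α(k) > g_β(k)} ⊆ n`. -/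
def LeFrom (n : ℕ) (u v : ℕ → ℕ) : Prop := ∀ k, n ≤ k → u k ≤ v k

theorem LeFrom.mono {n m : ℕ} {u v : ℕ → ℕ} (h : LeFrom n u v) (hnm : n ≤ m) : LeFrom m u v :=
  fun k hk => h k (hnm.trans hk)

theorem LeFrom.trans {m n : ℕ} {u v w : ℕ → ℕ} (huv : LeFrom m u v) (hvw : LeFrom n v w) :
    LeFrom (max m n) u w :=
  fun k hk => (huv k (le_of_max_le_left hk)).trans (hvw k (le_of_max_le_right hk))

theorem LeStar.exists_leFrom {u v : ℕ → ℕ} (h : LeStar u v) : ∃ n, LeFrom n u v := by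
  obtain ⟨b, hb⟩ := h.bddAbove
  exact ⟨b + 1, fun k hk => not_lt.1 fun hlt => by have := hb hlt; omega⟩

def DipsBelow {X : Type*} (u : ℕ → ℕ) (g : X → ℕ → ℕ) (A : Set X) : Prop :=
  ∀ n, {x ∈ A | LeFrom n u (g x)}.Finite

section DipsBelow

variable {X : Type*} {u u' : ℕ → ℕ} {g : X → ℕ → ℕ} {A B : Set X}

theorem DipsBelow.subset (hB : DipsBelow u g B) (hAB : A ⊆ B) : DipsBelow u g A :=
  fun n => (hB n).subset fun _ hx => ⟨hAB hx.1, hx.2⟩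

theorem DipsBelow.union (hA : DipsBelow u g A) (hB : DipsBelow u g B) :
    DipsBelow u g (A ∪ B) :=
  fun n => by simpa only [mem_union, sep_union] using (hA n).union (hB n)

theorem DipsBelow.of_leStar (hA : DipsBelow u g A) (huu' : LeStar u u') : DipsBelow u' g A := by
  obtain ⟨m, hm⟩ := huu'.exists_leFrom
  exact fun n => (hA (max m n)).subset fun x hx => ⟨hx.1, hm.trans hx.2⟩

theorem DipsBelow.countable (hA : DipsBelow u g A) (hle : ∀ x ∈ A, LeStar u (g x)) :
    A.Countable := by
  have hcover : A ⊆ ⋃ n, {x ∈ A | LeFrom n u (g x)} := fun x hx =>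
    let ⟨n, hn⟩ := (hle x hx).exists_leFrom
    mem_iUnion.2 ⟨n, hx, hn⟩
  exact (countable_iUnion fun n => (hA n).countable).mono hcover

theorem dipsBelow_of_forall_countable (h : ∀ Y ⊆ A, Y.Countable → DipsBelow u g Y) :
    DipsBelow u g A := by
  intro n
  by_contra hinf
  set Y := range fun i => (Set.Infinite.natEmbedding _ hinf i : X)
  have hYA : Y ⊆ {x ∈ A | LeFrom n u (g x)} := range_subset_iff.2 fun i => Subtype.mem _
  have hYinf : Y.Infinite :=
    infinite_range_of_injective (Subtype.val_injective.comp (Function.Embedding.injective _))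
  refine hYinf ((h Y (hYA.trans (sep_subset _ _)) (countable_range _) n).subset ?_)
  exact fun y hy => ⟨hy, (hYA hy).2⟩

theorem exists_dipsBelow_diagonal {e : ℕ → Set X} (he : ∀ i, DipsBelow u g (e i)) :
    ∃ A ⊆ ⋃ i, e i, DipsBelow u g A ∧ ∀ i, (e i \ A).Finite := by
  refine ⟨⋃ i, {x ∈ e i | ¬ LeFrom i u (g x)}, iUnion_mono fun i => sep_subset _ _,
    fun n => ?_, fun i => ?_⟩
  · refine ((finite_lt_nat n).biUnion fun i _ => he i n).subset ?_
    rintro x ⟨hxA, hle⟩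
    obtain ⟨i, hxi, hnot⟩ := mem_iUnion.1 hxA
    exact mem_iUnion₂.2 ⟨i, lt_of_not_ge fun hni => hnot (hle.mono hni), hxi, hle⟩
  · refine (he i i).subset fun x hx => ⟨hx.1, not_not.1 fun hnot => hx.2 ?_⟩
    exact mem_iUnion.2 ⟨i, hx.1, hnot⟩

theorem exists_uniform_leFrom {C : Set X} (hle : ∀ x ∈ C, LeStar u (g x))
    (hfin : ∀ A ⊆ C, A.Countable → DipsBelow u g A → A.Finite) :
    ∃ N, ∀ x ∈ C, LeFrom N u (g x) := by
  by_contra! hno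
  choose x hxC hx using hno
  have hdips : DipsBelow u g (range x) := fun n => ((finite_lt_nat n).image x).subset <| by
    rintro _ ⟨⟨N, rfl⟩, hN⟩
    exact ⟨N, lt_of_not_ge fun hnN => hx N (hN.mono hnN), rfl⟩
  have hrange := hfin _ (range_subset_iff.2 hxC) (countable_range x) hdips
  -- finitely many counterexamples have a common threshold `M`, which `x M` then violates
  choose! n hn using fun y hy => (hle y hy).exists_leFrom
  obtain ⟨M, hM⟩ := (hrange.image n).bddAbove
  exact hx M ((hn _ (hxC M)).mono (hM (mem_image_of_mem n (mem_range_self M))))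

end DipsBelow

theorem Ordinal.pos_of_aleph0_lt_cof {o : Ordinal} (h : ℵ₀ < o.cof) : 0 < o :=
  pos_iff_ne_zero.2 fun ho => by simp [ho] at h

theorem exists_cofinal_of_iUnion_eq {o : Ordinal} (ho : ℵ₀ < o.cof) {B : ℕ → Set Ordinal}
    (hB : ⋃ n, B n = Iio o) : ∃ n, ∀ b < o, ∃ β ∈ B n, b ≤ β := by
  by_contra! h
  choose b hbo hb using h
  have hsup : ⨆ n, b n < o := Ordinal.lift_iSup_lt_of_lt_cof (by simpa using ho) hbo
  obtain ⟨n, hn⟩ := mem_iUnion.1 (hB ▸ hsup : ⨆ n, b n ∈ ⋃ n, B n)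
  exact (hb n _ hn).not_ge (Ordinal.le_iSup b n)

theorem exists_gt_of_countable {P : Set (ℵ₁ : Cardinal.{u}).ord.ToType} (hP : P.Countable) :
    ∃ ξ, ∀ p ∈ P, p < ξ := by
  by_contra! h
  have hcof : Order.cof (ℵ₁ : Cardinal.{u}).ord.ToType ≤ #P := Order.cof_le h
  rw [Ordinal.cof_toType, isRegular_aleph_one.cof_ord] at hcof
  exact (hcof.trans hP.le_aleph0).not_gt aleph0_lt_aleph_one

theorem exists_countable_cover_of_mk_eq_aleph_one {X : Type u} {S : Set X}
    (hS : #S = lift.{u} (ℵ₁ : Cardinal.{0})) :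
    ∃ Z : (ℵ₁ : Cardinal.{0}).ord.ToType → Set X, (∀ ξ, Z ξ ⊆ S ∧ (Z ξ).Countable) ∧
      ∀ Y ⊆ S, Y.Countable → ∃ ξ, Y ⊆ Z ξ := by
  obtain ⟨e⟩ : Nonempty ((ℵ₁ : Cardinal.{0}).ord.ToType ≃ S) := by
    rw [← lift_mk_eq', mk_toType, card_ord, hS, lift_uzero]
  refine ⟨fun ξ => (fun x => (e x : X)) '' Iio ξ, fun ξ => ⟨?_, ?_⟩, fun Y hYS hY => ?_⟩
  · rintro _ ⟨x, -, rfl⟩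
    exact (e x).2
  · exact (le_aleph0_iff_set_countable.1 (lt_aleph_one_iff.1 (by simpa using mk_Iio_lt ξ))).image _
  · obtain ⟨ξ, hξ⟩ := exists_gt_of_countable (hY.preimage (Subtype.val_injective.comp e.injective))
    exact ⟨ξ, fun y hy => ⟨e.symm ⟨y, hYS hy⟩, hξ _ (by simpa), by simp⟩⟩

def gapIdeal (κ lam : Cardinal.{0}) (f g : Ordinal → ℕ → ℕ) : Set (Set Ordinal) :=
  {A | A ⊆ Iio lam.ord ∧ A.Countable ∧ ∃ α < κ.ord, DipsBelow (f α) g A}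

section Gap

variable {κ lam : Cardinal.{0}} {f g : Ordinal → ℕ → ℕ}

theorem IsPregap.dipsBelow_of_le (hpre : IsPregap κ lam f g) {α α' : Ordinal} {A : Set Ordinal}
    (hαα' : α ≤ α') (hα' : α' < κ.ord) (hA : DipsBelow (f α) g A) : DipsBelow (f α') g A :=
  hA.of_leStar (hpre.2.2.1 α α' hαα' hα')

theorem isPIdealOn_gapIdeal (hκ : ℵ₀ < κ.ord.cof) (hpre : IsPregap κ lam f g) :
    IsPIdealOn (gapIdeal κ lam f g) (Iio lam.ord) := by
  refine ⟨fun A hA => ⟨hA.1, hA.2.1⟩, ?_, ?_, fun Q hQ hQc => ?_⟩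
  · rintro A ⟨hA, hAc, α, hα, hdips⟩ B hBA
    exact ⟨hBA.trans hA, hAc.mono hBA, α, hα, hdips.subset hBA⟩
  · rintro A ⟨hA, hAc, α, hα, hdA⟩ B ⟨hB, hBc, β, hβ, hdB⟩
    have hmax := max_lt hα hβ
    exact ⟨union_subset hA hB, hAc.union hBc, max α β, hmax,
      (hpre.dipsBelow_of_le (le_max_left α β) hmax hdA).union
        (hpre.dipsBelow_of_le (le_max_right α β) hmax hdB)⟩
  rcases Q.eq_empty_or_nonempty with rfl | hQne
  · exact ⟨∅, ⟨empty_subset _, countable_empty, 0, Ordinal.pos_of_aleph0_lt_cof hκ,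
      fun n => by simp⟩, by simp⟩
  obtain ⟨e, rfl⟩ := hQc.exists_eq_range hQne
  choose he hec α hα hdips using fun i => hQ (mem_range_self i)
  have hsup : ⨆ i, α i < κ.ord := Ordinal.iSup_lt_of_lt_cof (by rwa [mk_nat]) hα
  obtain ⟨A, hAe, hA, hdiff⟩ := exists_dipsBelow_diagonal fun i =>
    hpre.dipsBelow_of_le (Ordinal.le_iSup α i) hsup (hdips i)
  exact ⟨A, ⟨hAe.trans (iUnion_subset he), (countable_iUnion hec).mono hAe, _, hsup, hA⟩,
    forall_mem_range.2 hdiff⟩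

theorem IsPregap.not_exists_aleph_one (hκ : ℵ₁ < κ.ord.cof) (hpre : IsPregap κ lam f g) :
    ¬ ∃ S : Set Ordinal, S ⊆ Iio lam.ord ∧ #S = ℵ₁ ∧
      ∀ Z ⊆ S, Z.Countable → Z ∈ gapIdeal κ lam f g := by
  rintro ⟨S, hSlam, hS, hSI⟩
  obtain ⟨Z, hZ, hcover⟩ := exists_countable_cover_of_mk_eq_aleph_one (hS.trans (by simp))
  choose α hα hdips using fun ξ => (hSI _ (hZ ξ).1 (hZ ξ).2).2.2
  have hsup : ⨆ ξ, α ξ < κ.ord := Ordinal.iSup_lt_of_lt_cof (by simpa using hκ) hα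
  have hdipsS : DipsBelow (f (⨆ ξ, α ξ)) g S := dipsBelow_of_forall_countable fun Y hYS hY => by
    obtain ⟨ξ, hξ⟩ := hcover Y hYS hY
    exact (hpre.dipsBelow_of_le (Ordinal.le_iSup α ξ) hsup (hdips ξ)).subset hξ
  have hSc := hdipsS.countable fun β hβ => hpre.2.2.2.2 _ hsup β (hSlam hβ)
  rw [← le_aleph0_iff_set_countable, hS] at hSc
  exact hSc.not_gt aleph0_lt_aleph_one

theorem IsPregap.exists_interpolant {C : Set Ordinal} (hpre : IsPregap κ lam f g)
    (hC : C ⊆ Iio lam.ord) (hne : C.Nonempty) (hcof : ∀ b < lam.ord, ∃ β ∈ C, b ≤ β)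
    (hunif : ∀ α < κ.ord, ∃ N, ∀ β ∈ C, LeFrom N (f α) (g β)) :
    ∃ h : ℕ → ℕ, (∀ α < κ.ord, LeStar (f α) h) ∧ ∀ β < lam.ord, LeStar h (g β) := by
  have : Nonempty C := hne.to_subtype
  refine ⟨fun k => ⨅ β : C, g β k, fun α hα => ?_, fun b hb => ?_⟩
  · obtain ⟨N, hN⟩ := hunif α hα
    exact (finite_lt_nat N).subset fun k (hk : (⨅ β : C, g β k) < f α k) =>
      lt_of_not_ge fun hNk => hk.not_ge (le_ciInf fun β => hN _ β.2 k hNk)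
  · obtain ⟨β, hβC, hbβ⟩ := hcof b hb
    exact (hpre.2.2.2.1 b β hbβ (hC hβC)).subset fun k (hk : g b k < ⨅ β : C, g β k) =>
      hk.trans_le (ciInf_le (OrderBot.bddBelow _) (⟨β, hβC⟩ : C))

theorem IsGap.not_exists_iUnion_eq (hlam : ℵ₀ < lam.ord.cof) (hgap : IsGap κ lam f g) :
    ¬ ∃ B : ℕ → Set Ordinal, (⋃ n, B n) = Iio lam.ord ∧
      ∀ n, ∀ A ∈ gapIdeal κ lam f g, (B n ∩ A).Finite := by
  rintro ⟨B, hBU, hBI⟩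
  obtain ⟨n, hcof⟩ := exists_cofinal_of_iUnion_eq hlam hBU
  have hC : B n ⊆ Iio lam.ord := hBU ▸ subset_iUnion B n
  obtain ⟨β, hβ, -⟩ := hcof 0 (Ordinal.pos_of_aleph0_lt_cof hlam)
  refine hgap.2 (hgap.1.exists_interpolant hC ⟨β, hβ⟩ hcof fun α hα => ?_)
  refine exists_uniform_leFrom (fun β hβ => hgap.1.2.2.2.2 α hα β (hC hβ)) fun A hAC hA hdips => ?_
  simpa [inter_eq_right.2 hAC] using hBI n A ⟨hAC.trans hC, hA, α, hα, hdips⟩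

end Gap

theorem pid_fails_of_gap_general (κ lam : Cardinal.{0}) (hκreg : κ.IsRegular)
    (hlamreg : lam.IsRegular)
    (hlamunc : Cardinal.aleph0 < lam) (hκ : Cardinal.aleph 1 < κ)
    (f g : Ordinal → ℕ → ℕ) (hgap : IsGap κ lam f g) :
    ∃ I : Set (Set Ordinal), IsPIdealOn I (Set.Iio lam.ord) ∧
      ¬ (∃ S : Set Ordinal, S ⊆ Set.Iio lam.ord ∧ #S = Cardinal.aleph 1 ∧
          ∀ Z ⊆ S, Z.Countable → Z ∈ I) ∧
      ¬ (∃ B : ℕ → Set Ordinal, (⋃ n, B n) = Set.Iio lam.ord ∧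
          ∀ n, ∀ A ∈ I, (B n ∩ A).Finite) := by
  have hκcof : ℵ₁ < κ.ord.cof := by rwa [hκreg.cof_ord]
  exact ⟨gapIdeal κ lam f g, isPIdealOn_gapIdeal (aleph0_lt_aleph_one.trans hκcof) hgap.1,
    hgap.1.not_exists_aleph_one hκcof, hgap.not_exists_iUnion_eq (by rwa [hlamreg.cof_ord])⟩

/-- If there is a `(κ, λ)`-gap with `κ, λ` regular uncountable and `κ > ℵ₁`, then
PID_λ fails: there is a P-ideal of countable subsets of `λ` for which both alternatives
of the P-ideal dichotomy fail. -/
theorem pid_fails_of_gap (κ lam : Cardinal.{0}) (hκreg : κ.IsRegular)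
    (hlamreg : lam.IsRegular) (hκunc : Cardinal.aleph0 < κ)
    (hlamunc : Cardinal.aleph0 < lam) (hκ : Cardinal.aleph 1 < κ)
    (f g : Ordinal → ℕ → ℕ) (hgap : IsGap κ lam f g) :
    ∃ I : Set (Set Ordinal), IsPIdealOn I (Set.Iio lam.ord) ∧
      ¬ (∃ S : Set Ordinal, S ⊆ Set.Iio lam.ord ∧ #S = Cardinal.aleph 1 ∧
          ∀ Z ⊆ S, Z.Countable → Z ∈ I) ∧
      ¬ (∃ B : ℕ → Set Ordinal, (⋃ n, B n) = Set.Iio lam.ord ∧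
          ∀ n, ∀ A ∈ I, (B n ∩ A).Finite) :=
  pid_fails_of_gap_general κ lam hκreg hlamreg hlamunc hκ f g hgap
end

section
/- The family ℐ = {A ∈ [λ]^{ℵ₀} : ∃α < κ such that for all n ∈ ω, the set {β ∈ A : [f_α > g_β] ⊆ n} is finite} is a P-ideal, where ⟨f_α : α < κ⟩, ⟨g_β : β < λ⟩ is a (κ,λ)-pregap with κ of uncountable cofinality and [f > g] denotes {k ∈ ω : f(k) > g(k)}. -/
/-!
Call `A` witnessed by `h` when for every `n` only finitely many `β ∈ A` have `[h > g_β] ⊆ n`.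
Enlarging `h` modulo finite keeps a witness, so finitely many members of `ℐ` share a witness
(their maximum), and countably many share their supremum, which stays below `κ` because
`cf κ > ω`. Given `B₀, B₁, …` with a common witness `h`, remove from each `Bᵢ` the finitely
many `β` with `[h > g_β] ⊆ i`; the union of what is left is still witnessed by `h`, since a
`β` with `[h > g_β] ⊆ n` can only survive in one of `B₀, …, Bₙ₋₁`.
-/

open Set Cardinal

namespace Pregap

variable {ι : Type*} (g : ι → ℕ → ℕ)

def Witnesses (h : ℕ → ℕ) (A : Set ι) : Prop :=
  ∀ n : ℕ, {β ∈ A | {k | g β k < h k} ⊆ Iio n}.Finite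

variable {g} {h h' : ℕ → ℕ} {A B : Set ι}

theorem Witnesses.mono (hA : Witnesses g h A) (hBA : B ⊆ A) : Witnesses g h B :=
  fun n => (hA n).subset fun _ ⟨hβB, hβ⟩ => ⟨hBA hβB, hβ⟩

theorem Witnesses.union (hA : Witnesses g h A) (hB : Witnesses g h B) :
    Witnesses g h (A ∪ B) := fun n =>
  ((hA n).union (hB n)).subset fun _ ⟨hβ, hβn⟩ => hβ.imp (⟨·, hβn⟩) (⟨·, hβn⟩)

theorem Witnesses.of_leStar (hA : Witnesses g h A) (hhh' : LeStar h h') : Witnesses g h' A := by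
  intro n
  obtain ⟨m, hm⟩ := hhh'.bddAbove
  refine (hA (max n (m + 1))).subset fun β ⟨hβA, hβ⟩ => ⟨hβA, fun k hk => ?_⟩
  rcases lt_or_ge (h' k) (h k) with hlt | hle
  · exact lt_max_of_lt_right (Nat.lt_succ_of_le (hm hlt))
  · exact lt_max_of_lt_left (mem_Iio.1 (hβ (hk.trans_le hle)))

theorem Witnesses.exists_diagonal {B : ℕ → Set ι} (hB : ∀ i, Witnesses g h (B i)) :
    ∃ A ⊆ ⋃ i, B i, Witnesses g h A ∧ ∀ i, (B i \ A).Finite := by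
  set T : ℕ → Set ι := fun i => {β ∈ B i | {k | g β k < h k} ⊆ Iio i}
  refine ⟨⋃ i, B i \ T i, iUnion_mono fun i => sdiff_subset, fun n => ?_, fun i => ?_⟩
  · refine ((finite_lt_nat n).biUnion fun i _ => hB i n).subset ?_
    rintro β ⟨hβA, hβn⟩
    obtain ⟨i, hβi, hβT⟩ := mem_iUnion.1 hβA
    have hin : i < n := by
      by_contra! hni
      exact hβT ⟨hβi, hβn.trans (Iio_subset_Iio hni)⟩
    exact mem_biUnion hin ⟨hβi, hβn⟩
  · refine (hB i i).subset fun β ⟨hβi, hβA⟩ => ?_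
    by_contra hβT
    exact hβA (mem_iUnion.2 ⟨i, hβi, hβT⟩)

end Pregap

open Pregap in
/-- Given a `(κ, λ)`-pregap with `κ` of uncountable cofinality, the family
`ℐ = {A ∈ [λ]^{≤ℵ₀} : ∃ α < κ ∀ n, {β ∈ A : [f_α > g_β] ⊆ n} is finite}` is a P-ideal:
closed under subsets and finite unions, and every countable subfamily has a
`⊆*`-upper bound in the family. -/
theorem witnessing_family_is_pIdeal (κ lam : Cardinal.{0})
    (hκcof : Cardinal.aleph0 < κ.ord.cof)
    (f g : Ordinal → ℕ → ℕ) (hpre : IsPregap κ lam f g) :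
    let I : Set (Set Ordinal) := {A | A ⊆ Set.Iio lam.ord ∧ A.Countable ∧
      ∃ α < κ.ord, ∀ n : ℕ, {β ∈ A | {k | g β k < f α k} ⊆ Set.Iio n}.Finite}
    (∀ A ∈ I, ∀ B ⊆ A, B ∈ I) ∧
    (∀ A ∈ I, ∀ B ∈ I, A ∪ B ∈ I) ∧
    (∀ Q ⊆ I, Q.Countable → ∃ A ∈ I, ∀ B ∈ Q, (B \ A).Finite) := by
  intro I
  have hf := hpre.2.2.1
  refine ⟨?_, ?_, ?_⟩
  · rintro A ⟨hAl, hAc, α, hα, hA⟩ B hBA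
    exact ⟨hBA.trans hAl, hAc.mono hBA, α, hα, Witnesses.mono hA hBA⟩
  · rintro A ⟨hAl, hAc, α, hα, hA⟩ B ⟨hBl, hBc, α', hα', hB⟩
    have hmax : max α α' < κ.ord := max_lt hα hα'
    exact ⟨union_subset hAl hBl, hAc.union hBc, max α α', hmax,
      (Witnesses.of_leStar hA (hf _ _ (le_max_left α α') hmax)).union
        (Witnesses.of_leStar hB (hf _ _ (le_max_right α α') hmax))⟩
  · intro Q hQI hQc
    rcases Q.eq_empty_or_nonempty with rfl | hQne
    · have hκ : 0 < κ.ord := pos_iff_ne_zero.2 fun h0 => by simp [h0] at hκcof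
      exact ⟨∅, ⟨empty_subset _, countable_empty, 0, hκ, fun n => by simp⟩, by simp⟩
    obtain ⟨B, rfl⟩ := hQc.exists_eq_range hQne
    choose hBl hBc αs hαs hB using fun i => hQI (mem_range_self i)
    have hα : ⨆ i, αs i < κ.ord := Ordinal.iSup_lt_of_lt_cof (by rwa [mk_nat]) hαs
    obtain ⟨A, hAB, hA, hBA⟩ := Witnesses.exists_diagonal fun i =>
      Witnesses.of_leStar (hB i) (hf _ _ (Ordinal.le_iSup αs i) hα)
    refine ⟨A, ⟨hAB.trans (iUnion_subset hBl), (countable_iUnion hBc).mono hAB, _, hα, hA⟩, ?_⟩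
    rintro _ ⟨i, rfl⟩
    exact hBA i
end
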